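/- arXiv:1901.10308 — 5 statements merged into one kernel-verified Lean document; each statement's English description precedes it below -/
import Mathlib

section
/- Let H : T*Q → ℝ be smooth on the cotangent bundle of a manifold Q, let X_H be its Hamiltonian vector field, and let γ be a closed one-form on Q. Define X_H^γ = Tπ_Q ∘ X_H ∘ γ. Then X_H and X_H^γ are γ-related (i.e., Tγ(X_H^γ(q)) = X_H(γ(q)) for all q) if and only if d(H ∘ γ) = 0. -/
open Matrix

lemma eval_L {n : ℕ} (L : ((Fin n → ℝ) × (Fin n → ℝ)) →L[ℝ] ℝ) (v w : Fin n → ℝ) :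
    L (v, w) = (∑ A, v A * L (Pi.single A 1, 0)) + ∑ A, w A * L (0, Pi.single A 1) := by
  have hsingle : ∀ A : Fin n, (fun j => if A = j then (1:ℝ) else 0) = Pi.single A 1 := by
    intro A; funext j; simp [Pi.single_apply, eq_comm]
  have hvw : ((v, w) : (Fin n → ℝ) × (Fin n → ℝ)) = (v, 0) + (0, w) := by simp
  rw [hvw, map_add]
  have L1 : (Fin n → ℝ) →ₗ[ℝ] ℝ :=
    (L.toLinearMap).comp (LinearMap.inl ℝ (Fin n → ℝ) (Fin n → ℝ))
  have h1 : L (v, 0) = ∑ A, v A * L (Pi.single A 1, 0) := by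
    have := LinearMap.pi_apply_eq_sum_univ
      ((L.toLinearMap).comp (LinearMap.inl ℝ (Fin n → ℝ) (Fin n → ℝ))) v
    simp only [LinearMap.comp_apply, LinearMap.inl_apply, ContinuousLinearMap.coe_coe,
      smul_eq_mul, hsingle] at this
    exact this
  have h2 : L (0, w) = ∑ A, w A * L (0, Pi.single A 1) := by
    have := LinearMap.pi_apply_eq_sum_univ
      ((L.toLinearMap).comp (LinearMap.inr ℝ (Fin n → ℝ) (Fin n → ℝ))) w
    simp only [LinearMap.comp_apply, LinearMap.inr_apply, ContinuousLinearMap.coe_coe,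
      smul_eq_mul, hsingle] at this
    exact this
  rw [h1, h2]

/-- Geometric Hamilton–Jacobi theorem in local coordinates: for a smooth
Hamiltonian `H` on `T*Q ≅ ℝⁿ × ℝⁿ`, its Hamiltonian vector field `X_H`,
and a closed one-form `γ`, the fields `X_H` and `X_H^γ = Tπ_Q ∘ X_H ∘ γ`
are `γ`-related iff `d(H ∘ γ) = 0`. -/
theorem stmt_0 {n : ℕ}
    (H : (Fin n → ℝ) × (Fin n → ℝ) → ℝ) (hH : ContDiff ℝ (⊤ : ℕ∞) H)
    (γ : (Fin n → ℝ) → (Fin n → ℝ)) (hγ : ContDiff ℝ (⊤ : ℕ∞) γ)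
    (hclosed : ∀ (q : Fin n → ℝ) (v w : Fin n → ℝ),
      fderiv ℝ γ q v ⬝ᵥ w = fderiv ℝ γ q w ⬝ᵥ v)
    (XH : (Fin n → ℝ) × (Fin n → ℝ) → (Fin n → ℝ) × (Fin n → ℝ))
    (hXH : ∀ z, XH z = (fun A => fderiv ℝ H z (0, Pi.single A 1),
                        fun A => - fderiv ℝ H z (Pi.single A 1, 0)))
    (XHγ : (Fin n → ℝ) → (Fin n → ℝ))
    (hXHγ : ∀ q, XHγ q = (XH (q, γ q)).1) :
    (∀ q, ((XHγ q, fderiv ℝ γ q (XHγ q)) : (Fin n → ℝ) × (Fin n → ℝ)) = XH (q, γ q))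
      ↔ (∀ q, fderiv ℝ (fun x => H (x, γ x)) q = 0) := by
  have hHd : Differentiable ℝ H := hH.differentiable (by simp)
  have hγd : Differentiable ℝ γ := hγ.differentiable (by simp)
  -- chain rule
  have key : ∀ q v, fderiv ℝ (fun x => H (x, γ x)) q v
      = fderiv ℝ H (q, γ q) (v, fderiv ℝ γ q v) := by
    intro q v
    have h1 : HasFDerivAt (fun x : Fin n → ℝ => (x, γ x))
        ((ContinuousLinearMap.id ℝ (Fin n → ℝ)).prod (fderiv ℝ γ q)) q :=
      HasFDerivAt.prodMk (hasFDerivAt_id q) (hγd q).hasFDerivAt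
    have h2 : fderiv ℝ (fun x => H (x, γ x)) q
        = (fderiv ℝ H (q, γ q)).comp
          ((ContinuousLinearMap.id ℝ (Fin n → ℝ)).prod (fderiv ℝ γ q)) :=
      ((hHd (q, γ q)).hasFDerivAt.comp q h1).fderiv
    rw [h2]; rfl
  -- expansion of fderiv of composition
  have expand : ∀ q v, fderiv ℝ (fun x => H (x, γ x)) q v
      = (∑ A, v A * fderiv ℝ H (q, γ q) (Pi.single A 1, 0))
        + (fderiv ℝ γ q (XHγ q)) ⬝ᵥ v := by
    intro q v
    rw [key q v, eval_L]
    congr 1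
    calc ∑ A, (fderiv ℝ γ q v) A * fderiv ℝ H (q, γ q) (0, Pi.single A 1)
        = ∑ A, (fderiv ℝ γ q v) A * (XHγ q) A := by
          refine Finset.sum_congr rfl fun A _ => ?_
          rw [hXHγ, hXH]
      _ = (fderiv ℝ γ q v) ⬝ᵥ (XHγ q) := rfl
      _ = (fderiv ℝ γ q (XHγ q)) ⬝ᵥ v := hclosed q v (XHγ q)
  constructor
  · intro hrel q
    ext v
    have h := hrel q
    rw [hXH] at h
    have hsnd : fderiv ℝ γ q (XHγ q) = fun A => - fderiv ℝ H (q, γ q) (Pi.single A 1, 0) :=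
      (Prod.ext_iff.1 h).2
    rw [ContinuousLinearMap.zero_apply, expand q v, hsnd]
    simp only [dotProduct, neg_mul]
    rw [← Finset.sum_add_distrib]
    have : ∀ A : Fin n, v A * fderiv ℝ H (q, γ q) (Pi.single A 1, 0)
        + -(fderiv ℝ H (q, γ q) (Pi.single A 1, 0) * v A) = 0 := fun A => by ring
    simp [this]
  · intro hd q
    rw [hXH]
    refine Prod.ext ?_ ?_
    · simpa [hXH] using hXHγ q
    · funext B
      have h : fderiv ℝ (fun x => H (x, γ x)) q (Pi.single B 1) = 0 := by
        rw [hd q]; rfl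
      rw [expand q (Pi.single B 1)] at h
      have hs : (∑ A, (Pi.single B 1 : Fin n → ℝ) A * fderiv ℝ H (q, γ q) (Pi.single A 1, 0))
          = fderiv ℝ H (q, γ q) (Pi.single B 1, 0) := by
        rw [Finset.sum_eq_single B] <;> simp +contextual [Pi.single_apply]
      have hdot : (fderiv ℝ γ q (XHγ q)) ⬝ᵥ (Pi.single B 1) = (fderiv ℝ γ q (XHγ q)) B := by
        simp [dotProduct, Pi.single_apply, mul_ite]
      rw [hs, hdot] at h
      show (fderiv ℝ γ q (XHγ q)) B = - fderiv ℝ H (q, γ q) (Pi.single B 1, 0)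
      linarith
end

section
/- Let E : ℝ^n × ℝ^m → ℝ, E = E(x, λ), be smooth, and suppose the n × (n+m) matrix (∂²E/∂x∂x , ∂²E/∂x∂λ) has maximal rank n at every point of the set Z = {(x,λ) : ∂E/∂λ^α(x,λ) = 0 for all α}. Assume moreover that 0 is a regular value of the map (x,λ) ↦ (∂E/∂λ^α), so Z is a smooth submanifold of dimension n. Then the map Z → ℝ^n × ℝ^n, (x,λ) ↦ (x, ∂E/∂x(x,λ)), is an immersion whose image S is an n-dimensional immersed submanifold on which the canonical symplectic form Ω = Σ_A dp_A ∧ dx^A vanishes (i.e., S is Lagrangian in T*ℝ^n). -/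
open Matrix

private lemma single_smul_one {k : ℕ} (c : ℝ) (i : Fin k) :
    c • (Pi.single i 1 : Fin k → ℝ) = Pi.single i c := by
  rw [← Pi.single_smul]; simp

private lemma fst_decomp {n m : ℕ} (T : ((Fin n → ℝ) × (Fin m → ℝ)) →L[ℝ] ℝ)
    (u : Fin n → ℝ) : T (u, 0) = ∑ A, T (Pi.single A 1, 0) * u A := by
  have hu : ((u, (0 : Fin m → ℝ)) : (Fin n → ℝ) × (Fin m → ℝ))
      = ∑ A, u A • (((Pi.single A 1 : Fin n → ℝ)), (0 : Fin m → ℝ)) := by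
    rw [Prod.ext_iff]
    refine ⟨?_, by rw [Prod.snd_sum]; simp⟩
    rw [Prod.fst_sum]
    simp only [Prod.smul_fst]
    simp only [single_smul_one]
    exact (Finset.univ_sum_single u).symm
  rw [hu, map_sum]
  exact Finset.sum_congr rfl fun A _ => by rw [T.map_smul]; simp [mul_comm]

private lemma snd_decomp {n m : ℕ} (T : ((Fin n → ℝ) × (Fin m → ℝ)) →L[ℝ] ℝ)
    (μ : Fin m → ℝ) : T (0, μ) = ∑ α, T (0, Pi.single α 1) * μ α := by
  have hu : (((0 : Fin n → ℝ), μ) : (Fin n → ℝ) × (Fin m → ℝ))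
      = ∑ α, μ α • (((0 : Fin n → ℝ)), (Pi.single α 1 : Fin m → ℝ)) := by
    rw [Prod.ext_iff]
    refine ⟨by rw [Prod.fst_sum]; simp, ?_⟩
    rw [Prod.snd_sum]
    simp only [Prod.smul_snd]
    simp only [single_smul_one]
    exact (Finset.univ_sum_single μ).symm
  rw [hu, map_sum]
  exact Finset.sum_congr rfl fun α _ => by rw [T.map_smul]; simp [mul_comm]

/-- A Morse family `E(x, λ)` on the trivial bundle `ℝⁿ × ℝᵐ → ℝⁿ` generates a
Lagrangian submanifold `S = {(x, ∂E/∂x) : ∂E/∂λ = 0}` of `T*ℝⁿ`: the map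
`Φ : Z → ℝⁿ × ℝⁿ` is an immersion on the constraint manifold `Z` and the
canonical symplectic form vanishes on the image of its differential. -/
theorem stmt_2 {n m : ℕ}
    (E : (Fin n → ℝ) × (Fin m → ℝ) → ℝ) (hE : ContDiff ℝ (⊤ : ℕ∞) E)
    (G : (Fin n → ℝ) × (Fin m → ℝ) → (Fin m → ℝ))
    (hG : ∀ z α, G z α = fderiv ℝ E z (0, Pi.single α 1))
    (Z : Set ((Fin n → ℝ) × (Fin m → ℝ)))
    (hZ : Z = {z | G z = 0})
    (Φ : (Fin n → ℝ) × (Fin m → ℝ) → (Fin n → ℝ) × (Fin n → ℝ))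
    (hΦ : ∀ z, Φ z = (z.1, fun A => fderiv ℝ E z (Pi.single A 1, 0)))
    (hrank : ∀ z ∈ Z, Function.Surjective
      (fun v : (Fin n → ℝ) × (Fin m → ℝ) =>
        (fun A => fderiv ℝ (fun w => fderiv ℝ E w (Pi.single A 1, 0)) z v : Fin n → ℝ)))
    (hreg : ∀ z ∈ Z, Function.Surjective (fun v => fderiv ℝ G z v)) :
    (∀ z ∈ Z, ∀ v : (Fin n → ℝ) × (Fin m → ℝ),
        fderiv ℝ G z v = 0 → fderiv ℝ Φ z v = 0 → v = 0)
    ∧ (∀ z ∈ Z, ∀ v w : (Fin n → ℝ) × (Fin m → ℝ),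
        fderiv ℝ G z v = 0 → fderiv ℝ G z w = 0 →
        (fderiv ℝ Φ z v).2 ⬝ᵥ (fderiv ℝ Φ z w).1
          - (fderiv ℝ Φ z w).2 ⬝ᵥ (fderiv ℝ Φ z v).1 = 0) := by
  classical
  have hd : ContDiff ℝ (⊤ : ℕ∞) (fderiv ℝ E) := hE.fderiv_right (by simp)
  -- notation for the second derivative
  set H : (Fin n → ℝ) × (Fin m → ℝ) →
      ((Fin n → ℝ) × (Fin m → ℝ)) →L[ℝ] ((Fin n → ℝ) × (Fin m → ℝ)) →L[ℝ] ℝ :=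
    fun z => fderiv ℝ (fderiv ℝ E) z with hH
  have hsymm : ∀ z v w, H z v w = H z w v := fun z v w =>
    second_derivative_symmetric
      (fun y => (hE.differentiable (by simp) y).hasFDerivAt)
      ((hd.differentiable (by simp) z).hasFDerivAt) v w
  -- derivative of G
  have hGd : ∀ z v, fderiv ℝ G z v = fun α => H z v (0, Pi.single α 1) := by
    intro z v
    set L : (((Fin n → ℝ) × (Fin m → ℝ)) →L[ℝ] ℝ) →L[ℝ] (Fin m → ℝ) :=
      ContinuousLinearMap.pi (fun α : Fin m =>
        ContinuousLinearMap.apply ℝ ℝ ((0 : Fin n → ℝ), Pi.single α 1)) with hLdef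
    have hL : G = fun w => L (fderiv ℝ E w) := by
      funext w
      funext α
      rw [hG w α]
      rfl
    have h1 : HasFDerivAt G (L.comp (H z)) z := by
      rw [hL]
      exact L.hasFDerivAt.comp z ((hd.differentiable (by simp) z).hasFDerivAt)
    rw [h1.fderiv]
    rfl
  -- derivative of Φ
  have hΦd : ∀ z v, fderiv ℝ Φ z v = (v.1, fun A => H z v (Pi.single A 1, 0)) := by
    intro z v
    set L' : (((Fin n → ℝ) × (Fin m → ℝ)) →L[ℝ] ℝ) →L[ℝ] (Fin n → ℝ) :=
      ContinuousLinearMap.pi (fun A : Fin n =>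
        ContinuousLinearMap.apply ℝ ℝ ((Pi.single A 1 : Fin n → ℝ), (0 : Fin m → ℝ))) with hLdef'
    have hL : Φ = fun w => (w.1, L' (fderiv ℝ E w)) := by
      funext w
      rw [hΦ w]
      rfl
    have h1 : HasFDerivAt Φ
        ((ContinuousLinearMap.fst ℝ (Fin n → ℝ) (Fin m → ℝ)).prod (L'.comp (H z))) z := by
      rw [hL]
      exact HasFDerivAt.prodMk (hasFDerivAt_fst)
        (L'.hasFDerivAt.comp z ((hd.differentiable (by simp) z).hasFDerivAt))
    rw [h1.fderiv]
    rfl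
  constructor
  · -- immersion
    intro z hz v hGv hΦv
    rw [hΦd z v] at hΦv
    have hv1 : v.1 = 0 := congrArg Prod.fst hΦv
    have hvx : ∀ A, H z v (Pi.single A 1, 0) = 0 := fun A =>
      congrFun (congrArg Prod.snd hΦv) A
    have hvα : ∀ α, H z v (0, Pi.single α 1) = 0 := by
      intro α
      have := congrFun hGv α
      rw [hGd z v] at hGv
      exact (congrFun hGv α)
    -- H z v vanishes identically
    have hv0 : ∀ u, H z v u = 0 := by
      intro u
      have hu : u = ((u.1, 0) : (Fin n → ℝ) × (Fin m → ℝ)) + (0, u.2) := by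
        ext <;> simp
      rw [hu, map_add, fst_decomp, snd_decomp]
      simp [hvx, hvα]
    -- v = (0, v.2)
    have hveq : v = ((0 : Fin n → ℝ), v.2) := by
      rw [← hv1]
    obtain ⟨w, hw⟩ := hreg z hz v.2
    have hwα : ∀ α, H z w (0, Pi.single α 1) = v.2 α := by
      intro α
      have hw' : (fun α => H z w (0, Pi.single α 1)) = v.2 := by
        rw [← hGd z w]; exact hw
      exact congrFun hw' α
    have hdot : v.2 ⬝ᵥ v.2 = 0 := by
      have h1 : H z w ((0 : Fin n → ℝ), v.2) = v.2 ⬝ᵥ v.2 := by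
        rw [snd_decomp]
        exact Finset.sum_congr rfl fun α _ => by rw [hwα α]
      have h2 : H z w ((0 : Fin n → ℝ), v.2) = 0 := by
        rw [← hveq, hsymm z w v, hv0 w]
      rw [← h1, h2]
    have hv2 : v.2 = 0 := by
      have := dotProduct_self_eq_zero.mp hdot
      exact this
    rw [hveq, hv2]
    rfl
  · -- isotropic
    intro z hz v w hv hw
    have key : ∀ a b : (Fin n → ℝ) × (Fin m → ℝ), fderiv ℝ G z a = 0 →
        (fderiv ℝ Φ z a).2 ⬝ᵥ (fderiv ℝ Φ z b).1 = H z a b := by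
      intro a b ha
      rw [hΦd z a, hΦd z b]
      have haα : ∀ α, H z a (0, Pi.single α 1) = 0 := by
        intro α
        rw [hGd z a] at ha
        exact congrFun ha α
      have hb : b = ((b.1, 0) : (Fin n → ℝ) × (Fin m → ℝ)) + (0, b.2) := by
        ext <;> simp
      calc (fun A => H z a (Pi.single A 1, 0)) ⬝ᵥ b.1
          = H z a (b.1, 0) := (fst_decomp (H z a) b.1).symm
        _ = H z a b := by
            conv_rhs => rw [hb]
            rw [map_add, snd_decomp]
            simp [haα]
    rw [key v w hv, key w v hw, hsymm z v w, sub_self]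
end

section
/- Let L : ℝ³ → ℝ be smooth and F : ℝ³ → ℝ smooth, and define on TAQ (coordinates q₀, a₀, q₁, a₁) the Lagrangian L₂(q₀, a₀, q₁, a₁) = L(q₀, q₁, a₀) + (∂F/∂q₀)q₁ + (∂F/∂q₁)a₀ + (∂F/∂a₀)a₁ where F = F(q₀, q₁, a₀). If F satisfies ∂L/∂a₀ + ∂F/∂q₁ = 0 identically and ∂²F/∂a₀∂q₁ is nowhere zero, then along any smooth curve t ↦ (q₀(t), a₀(t)) the first-order Euler–Lagrange equations of L₂ imply a₀(t) = q̈₀(t) and the second-order Euler–Lagrange equation ∂L/∂q₀ − (d/dt)(∂L/∂q₁) + (d²/dt²)(∂L/∂q₂)|_{q₂ = q̈₀} = 0 for q₀(t). -/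
open ContinuousLinearMap
open scoped ContDiff


/-- The Schmidt Lagrangian `L₂` on `TAQ` (coordinates `(q₀, a₀, q₁, a₁)`) built
from a second-order Lagrangian `L(q₀, q₁, a₀)` and an auxiliary function
`F(q₀, q₁, a₀)`. -/
noncomputable def SchmidtL2 (L F : ℝ × ℝ × ℝ → ℝ) : ℝ × ℝ × ℝ × ℝ → ℝ :=
  fun u => L (u.1, u.2.2.1, u.2.1)
    + fderiv ℝ F (u.1, u.2.2.1, u.2.1) (1, 0, 0) * u.2.2.1
    + fderiv ℝ F (u.1, u.2.2.1, u.2.1) (0, 1, 0) * u.2.1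
    + fderiv ℝ F (u.1, u.2.2.1, u.2.1) (0, 0, 1) * u.2.2.2

-- smoothness of directional derivative
lemma infty_add_one_le : (∞ : WithTop ℕ∞) + 1 ≤ ∞ := le_of_eq rfl

lemma contDiff_fderiv_apply {F : ℝ × ℝ × ℝ → ℝ} (hF : ContDiff ℝ ∞ F) (e : ℝ × ℝ × ℝ) :
    ContDiff ℝ ∞ (fun v => fderiv ℝ F v e) :=
  (hF.fderiv_right (m := ∞) infty_add_one_le).clm_apply contDiff_const

-- linearity decomposition
lemma fderiv3_apply (G : ℝ × ℝ × ℝ → ℝ) (p : ℝ × ℝ × ℝ) (x y z : ℝ) :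
    fderiv ℝ G p (x, y, z) = x * fderiv ℝ G p (1, 0, 0) + y * fderiv ℝ G p (0, 1, 0)
      + z * fderiv ℝ G p (0, 0, 1) := by
  have h : (x, y, z) = x • ((1:ℝ), (0:ℝ), (0:ℝ)) + y • ((0:ℝ), (1:ℝ), (0:ℝ))
      + z • ((0:ℝ), (0:ℝ), (1:ℝ)) := by
    simp [Prod.ext_iff]
  rw [h, map_add, map_add, map_smul, map_smul, map_smul, smul_eq_mul, smul_eq_mul, smul_eq_mul]

lemma fderiv3_zero (G : ℝ × ℝ × ℝ → ℝ) (p : ℝ × ℝ × ℝ) :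
    fderiv ℝ G p ((0:ℝ), (0:ℝ), (0:ℝ)) = 0 := by
  rw [fderiv3_apply]; ring

-- symmetry of second derivatives
lemma fderiv_symm {G : ℝ × ℝ × ℝ → ℝ} (hG : ContDiff ℝ ∞ G) (u a b : ℝ × ℝ × ℝ) :
    fderiv ℝ (fun v => fderiv ℝ G v a) u b = fderiv ℝ (fun v => fderiv ℝ G v b) u a := by
  have hd : DifferentiableAt ℝ (fderiv ℝ G) u :=
    ((hG.fderiv_right (m := ∞) infty_add_one_le).differentiable (by simp)) u
  have key : ∀ e : ℝ × ℝ × ℝ,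
      fderiv ℝ (fun v => fderiv ℝ G v e) u = (fderiv ℝ (fderiv ℝ G) u).flip e := by
    intro e
    rw [fderiv_clm_apply hd (differentiableAt_const e)]
    simp
  rw [key a, key b]
  simp only [ContinuousLinearMap.flip_apply]
  exact second_derivative_symmetric
    (fun y => ((hG.differentiable (by simp)) y).hasFDerivAt)
    hd.hasFDerivAt b a

section main
variable {L F : ℝ × ℝ × ℝ → ℝ}

noncomputable def P1 : (ℝ × ℝ × ℝ × ℝ) →L[ℝ] ℝ := ContinuousLinearMap.fst ℝ ℝ (ℝ × ℝ × ℝ)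
noncomputable def P2 : (ℝ × ℝ × ℝ × ℝ) →L[ℝ] ℝ :=
  (ContinuousLinearMap.fst ℝ ℝ (ℝ × ℝ)).comp (ContinuousLinearMap.snd ℝ ℝ (ℝ × ℝ × ℝ))
noncomputable def P3 : (ℝ × ℝ × ℝ × ℝ) →L[ℝ] ℝ :=
  (ContinuousLinearMap.fst ℝ ℝ ℝ).comp
    ((ContinuousLinearMap.snd ℝ ℝ (ℝ × ℝ)).comp (ContinuousLinearMap.snd ℝ ℝ (ℝ × ℝ × ℝ)))
noncomputable def P4 : (ℝ × ℝ × ℝ × ℝ) →L[ℝ] ℝ :=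
  (ContinuousLinearMap.snd ℝ ℝ ℝ).comp
    ((ContinuousLinearMap.snd ℝ ℝ (ℝ × ℝ)).comp (ContinuousLinearMap.snd ℝ ℝ (ℝ × ℝ × ℝ)))
noncomputable def Pi3 : (ℝ × ℝ × ℝ × ℝ) →L[ℝ] ℝ × ℝ × ℝ := P1.prod (P3.prod P2)

lemma schmidt_fderiv (hL : ContDiff ℝ ∞ L) (hF : ContDiff ℝ ∞ F) (u w : ℝ × ℝ × ℝ × ℝ) :
    fderiv ℝ (SchmidtL2 L F) u w =
      fderiv ℝ L (u.1, u.2.2.1, u.2.1) (w.1, w.2.2.1, w.2.1)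
      + (fderiv ℝ (fun v => fderiv ℝ F v (1, 0, 0)) (u.1, u.2.2.1, u.2.1) (w.1, w.2.2.1, w.2.1)
          * u.2.2.1
        + fderiv ℝ F (u.1, u.2.2.1, u.2.1) (1, 0, 0) * w.2.2.1)
      + (fderiv ℝ (fun v => fderiv ℝ F v (0, 1, 0)) (u.1, u.2.2.1, u.2.1) (w.1, w.2.2.1, w.2.1)
          * u.2.1
        + fderiv ℝ F (u.1, u.2.2.1, u.2.1) (0, 1, 0) * w.2.1)
      + (fderiv ℝ (fun v => fderiv ℝ F v (0, 0, 1)) (u.1, u.2.2.1, u.2.1) (w.1, w.2.2.1, w.2.1)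
          * u.2.2.2
        + fderiv ℝ F (u.1, u.2.2.1, u.2.1) (0, 0, 1) * w.2.2.2) := by
  set p : ℝ × ℝ × ℝ := (u.1, u.2.2.1, u.2.1) with hp
  have hpi : HasFDerivAt (fun u : ℝ × ℝ × ℝ × ℝ => (u.1, u.2.2.1, u.2.1)) Pi3 u :=
    Pi3.hasFDerivAt
  have hdL : HasFDerivAt (fun u : ℝ × ℝ × ℝ × ℝ => L (u.1, u.2.2.1, u.2.1))
      ((fderiv ℝ L p).comp Pi3) u :=
    ((hL.differentiable (by simp) p).hasFDerivAt).comp u hpi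
  have hF1 : HasFDerivAt (fun u : ℝ × ℝ × ℝ × ℝ => fderiv ℝ F (u.1, u.2.2.1, u.2.1) (1,0,0))
      ((fderiv ℝ (fun v => fderiv ℝ F v (1,0,0)) p).comp Pi3) u :=
    ((((contDiff_fderiv_apply hF (1,0,0)).differentiable (by simp))
      p).hasFDerivAt).comp (g := fun v => fderiv ℝ F v (1,0,0)) u hpi
  have hF2 : HasFDerivAt (fun u : ℝ × ℝ × ℝ × ℝ => fderiv ℝ F (u.1, u.2.2.1, u.2.1) (0,1,0))
      ((fderiv ℝ (fun v => fderiv ℝ F v (0,1,0)) p).comp Pi3) u :=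
    ((((contDiff_fderiv_apply hF (0,1,0)).differentiable (by simp))
      p).hasFDerivAt).comp (g := fun v => fderiv ℝ F v (0,1,0)) u hpi
  have hF3 : HasFDerivAt (fun u : ℝ × ℝ × ℝ × ℝ => fderiv ℝ F (u.1, u.2.2.1, u.2.1) (0,0,1))
      ((fderiv ℝ (fun v => fderiv ℝ F v (0,0,1)) p).comp Pi3) u :=
    ((((contDiff_fderiv_apply hF (0,0,1)).differentiable (by simp))
      p).hasFDerivAt).comp (g := fun v => fderiv ℝ F v (0,0,1)) u hpi
  have hp2 : HasFDerivAt (fun u : ℝ × ℝ × ℝ × ℝ => u.2.1) P2 u := P2.hasFDerivAt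
  have hp3 : HasFDerivAt (fun u : ℝ × ℝ × ℝ × ℝ => u.2.2.1) P3 u := P3.hasFDerivAt
  have hp4 : HasFDerivAt (fun u : ℝ × ℝ × ℝ × ℝ => u.2.2.2) P4 u := P4.hasFDerivAt
  have hT := ((hdL.add (hF1.mul hp3)).add (hF2.mul hp2)).add (hF3.mul hp4)
  have hT' : HasFDerivAt (SchmidtL2 L F) _ u := hT
  rw [hT'.fderiv]
  simp only [ContinuousLinearMap.add_apply, ContinuousLinearMap.comp_apply,
    ContinuousLinearMap.smul_apply, smul_eq_mul, Pi3, P1, P2, P3, P4,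
    ContinuousLinearMap.prod_apply, ContinuousLinearMap.coe_fst',
    ContinuousLinearMap.coe_snd', ContinuousLinearMap.coe_comp', Function.comp_apply]
  ring

end main

section dirs
variable {L F : ℝ × ℝ × ℝ → ℝ}

lemma schmidt_d1 (hL : ContDiff ℝ ∞ L) (hF : ContDiff ℝ ∞ F) (u : ℝ × ℝ × ℝ × ℝ) :
    fderiv ℝ (SchmidtL2 L F) u (1, 0, 0, 0) =
      fderiv ℝ L (u.1, u.2.2.1, u.2.1) (1, 0, 0)
      + fderiv ℝ (fun v => fderiv ℝ F v (1, 0, 0)) (u.1, u.2.2.1, u.2.1) (1, 0, 0) * u.2.2.1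
      + fderiv ℝ (fun v => fderiv ℝ F v (0, 1, 0)) (u.1, u.2.2.1, u.2.1) (1, 0, 0) * u.2.1
      + fderiv ℝ (fun v => fderiv ℝ F v (0, 0, 1)) (u.1, u.2.2.1, u.2.1) (1, 0, 0) * u.2.2.2 := by
  rw [schmidt_fderiv hL hF]; norm_num

lemma schmidt_d2 (hL : ContDiff ℝ ∞ L) (hF : ContDiff ℝ ∞ F) (u : ℝ × ℝ × ℝ × ℝ) :
    fderiv ℝ (SchmidtL2 L F) u (0, 1, 0, 0) =
      fderiv ℝ L (u.1, u.2.2.1, u.2.1) (0, 0, 1)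
      + fderiv ℝ (fun v => fderiv ℝ F v (1, 0, 0)) (u.1, u.2.2.1, u.2.1) (0, 0, 1) * u.2.2.1
      + (fderiv ℝ (fun v => fderiv ℝ F v (0, 1, 0)) (u.1, u.2.2.1, u.2.1) (0, 0, 1) * u.2.1
          + fderiv ℝ F (u.1, u.2.2.1, u.2.1) (0, 1, 0))
      + fderiv ℝ (fun v => fderiv ℝ F v (0, 0, 1)) (u.1, u.2.2.1, u.2.1) (0, 0, 1) * u.2.2.2 := by
  rw [schmidt_fderiv hL hF]; norm_num

lemma schmidt_d3 (hL : ContDiff ℝ ∞ L) (hF : ContDiff ℝ ∞ F) (u : ℝ × ℝ × ℝ × ℝ) :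
    fderiv ℝ (SchmidtL2 L F) u (0, 0, 1, 0) =
      fderiv ℝ L (u.1, u.2.2.1, u.2.1) (0, 1, 0)
      + (fderiv ℝ (fun v => fderiv ℝ F v (1, 0, 0)) (u.1, u.2.2.1, u.2.1) (0, 1, 0) * u.2.2.1
          + fderiv ℝ F (u.1, u.2.2.1, u.2.1) (1, 0, 0))
      + fderiv ℝ (fun v => fderiv ℝ F v (0, 1, 0)) (u.1, u.2.2.1, u.2.1) (0, 1, 0) * u.2.1
      + fderiv ℝ (fun v => fderiv ℝ F v (0, 0, 1)) (u.1, u.2.2.1, u.2.1) (0, 1, 0) * u.2.2.2 := by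
  rw [schmidt_fderiv hL hF]; norm_num

lemma schmidt_d4 (hL : ContDiff ℝ ∞ L) (hF : ContDiff ℝ ∞ F) (u : ℝ × ℝ × ℝ × ℝ) :
    fderiv ℝ (SchmidtL2 L F) u (0, 0, 0, 1) =
      fderiv ℝ F (u.1, u.2.2.1, u.2.1) (0, 0, 1) := by
  rw [schmidt_fderiv hL hF]; norm_num [fderiv3_zero]

end dirs

/-- Schmidt's method in one dimension: if `∂L/∂a₀ + ∂F/∂q₁ = 0` and
`∂²F/∂a₀∂q₁ ≠ 0`, the first-order Euler–Lagrange equations of `L₂` along a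
curve imply `a₀ = q̈₀` and the second-order Euler–Lagrange equation of `L`. -/
theorem stmt_4 (L F : ℝ × ℝ × ℝ → ℝ) (hL : ContDiff ℝ (⊤ : ℕ∞) L) (hF : ContDiff ℝ (⊤ : ℕ∞) F)
    (hcomp : ∀ u : ℝ × ℝ × ℝ, fderiv ℝ L u (0, 0, 1) + fderiv ℝ F u (0, 1, 0) = 0)
    (hmix : ∀ u : ℝ × ℝ × ℝ, fderiv ℝ (fun v => fderiv ℝ F v (0, 1, 0)) u (0, 0, 1) ≠ 0)
    (q0 a0 : ℝ → ℝ) (hq0 : ContDiff ℝ (⊤ : ℕ∞) q0) (ha0 : ContDiff ℝ (⊤ : ℕ∞) a0)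
    (c : ℝ → ℝ × ℝ × ℝ × ℝ) (hc : ∀ t, c t = (q0 t, a0 t, deriv q0 t, deriv a0 t))
    (hEL1 : ∀ t, fderiv ℝ (SchmidtL2 L F) (c t) (1, 0, 0, 0)
      - deriv (fun s => fderiv ℝ (SchmidtL2 L F) (c s) (0, 0, 1, 0)) t = 0)
    (hEL2 : ∀ t, fderiv ℝ (SchmidtL2 L F) (c t) (0, 1, 0, 0)
      - deriv (fun s => fderiv ℝ (SchmidtL2 L F) (c s) (0, 0, 0, 1)) t = 0) :
    (∀ t, a0 t = deriv (deriv q0) t)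
    ∧ (∀ t, fderiv ℝ L (q0 t, deriv q0 t, deriv (deriv q0) t) (1, 0, 0)
      - deriv (fun s => fderiv ℝ L (q0 s, deriv q0 s, deriv (deriv q0) s) (0, 1, 0)) t
      + deriv (deriv (fun s =>
          fderiv ℝ L (q0 s, deriv q0 s, deriv (deriv q0) s) (0, 0, 1))) t = 0) := by
  have hL' : ContDiff ℝ ∞ L := hL.of_le (by simp)
  have hF' : ContDiff ℝ ∞ F := hF.of_le (by simp)
  have hq0' : ContDiff ℝ ∞ q0 := hq0.of_le (by simp)
  have ha0' : ContDiff ℝ ∞ a0 := ha0.of_le (by simp)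
  have one_le : (∞ : WithTop ℕ∞) ≠ 0 := by simp
  have hq1 : ContDiff ℝ ∞ (deriv q0) := (contDiff_infty_iff_deriv.1 hq0').2
  have ha1 : ContDiff ℝ ∞ (deriv a0) := (contDiff_infty_iff_deriv.1 ha0').2
  have hγ : ContDiff ℝ ∞ (fun s => ((q0 s, deriv q0 s, a0 s) : ℝ × ℝ × ℝ)) :=
    hq0'.prodMk (hq1.prodMk ha0')
  have hγd : ∀ t, HasDerivAt (fun s => ((q0 s, deriv q0 s, a0 s) : ℝ × ℝ × ℝ))
      (deriv q0 t, deriv (deriv q0) t, deriv a0 t) t := fun t =>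
    (((hq0'.differentiable one_le) t).hasDerivAt).prodMk
      ((((hq1.differentiable one_le) t).hasDerivAt).prodMk
        (((ha0'.differentiable one_le) t).hasDerivAt))
  have hcd : ∀ (G : ℝ × ℝ × ℝ → ℝ), ContDiff ℝ ∞ G → ∀ t,
      deriv (fun s => G (q0 s, deriv q0 s, a0 s)) t
        = deriv q0 t * fderiv ℝ G (q0 t, deriv q0 t, a0 t) (1, 0, 0)
          + deriv (deriv q0) t * fderiv ℝ G (q0 t, deriv q0 t, a0 t) (0, 1, 0)
          + deriv a0 t * fderiv ℝ G (q0 t, deriv q0 t, a0 t) (0, 0, 1) := by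
    intro G hG t
    have h := (((hG.differentiable one_le) _).hasFDerivAt).comp_hasDerivAt t (hγd t)
    have h' : HasDerivAt (fun s => G (q0 s, deriv q0 s, a0 s))
        ((fderiv ℝ G (q0 t, deriv q0 t, a0 t)) (deriv q0 t, deriv (deriv q0) t, deriv a0 t)) t := h
    rw [h'.deriv]
    exact fderiv3_apply G _ _ _ _
  -- Part 1
  have part1 : ∀ t, a0 t = deriv (deriv q0) t := by
    intro t
    have h2 := hEL2 t
    have hfun : (fun s => fderiv ℝ (SchmidtL2 L F) (c s) (0, 0, 0, 1))
        = fun s => fderiv ℝ F (q0 s, deriv q0 s, a0 s) (0, 0, 1) := by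
      funext s; rw [hc s, schmidt_d4 hL' hF']
    rw [hc t, schmidt_d2 hL' hF', hfun] at h2
    dsimp only at h2
    have hd4 : deriv (fun s => fderiv ℝ F (q0 s, deriv q0 s, a0 s) (0, 0, 1)) t
        = deriv q0 t * fderiv ℝ (fun v => fderiv ℝ F v (0, 0, 1)) (q0 t, deriv q0 t, a0 t) (1, 0, 0)
          + deriv (deriv q0) t
            * fderiv ℝ (fun v => fderiv ℝ F v (0, 0, 1)) (q0 t, deriv q0 t, a0 t) (0, 1, 0)
          + deriv a0 t
            * fderiv ℝ (fun v => fderiv ℝ F v (0, 0, 1)) (q0 t, deriv q0 t, a0 t) (0, 0, 1) :=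
      hcd _ (contDiff_fderiv_apply hF' _) t
    rw [hd4] at h2
    rw [fderiv_symm hF' (q0 t, deriv q0 t, a0 t) (1, 0, 0) (0, 0, 1),
      fderiv_symm hF' (q0 t, deriv q0 t, a0 t) (0, 0, 1) (0, 1, 0)] at h2
    have key : fderiv ℝ (fun v => fderiv ℝ F v (0, 1, 0)) (q0 t, deriv q0 t, a0 t) (0, 0, 1)
        * (a0 t - deriv (deriv q0) t) = 0 := by
      linear_combination h2 - hcomp (q0 t, deriv q0 t, a0 t)
    rcases mul_eq_zero.1 key with h | h
    · exact absurd h (hmix _)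
    · linarith
  refine ⟨part1, fun t => ?_⟩
  have hAfun : a0 = deriv (deriv q0) := funext part1
  rw [← hAfun]
  have h1 := hEL1 t
  have hfun1 : (fun s => fderiv ℝ (SchmidtL2 L F) (c s) (0, 0, 1, 0))
      = fun s => fderiv ℝ L (q0 s, deriv q0 s, a0 s) (0, 1, 0)
        + fderiv ℝ F (q0 s, deriv q0 s, a0 s) (1, 0, 0)
        + deriv (fun r => fderiv ℝ F (q0 r, deriv q0 r, a0 r) (0, 1, 0)) s := by
    funext s
    rw [hc s, schmidt_d3 hL' hF']
    dsimp only
    have hd : deriv (fun r => fderiv ℝ F (q0 r, deriv q0 r, a0 r) (0, 1, 0)) s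
        = deriv q0 s * fderiv ℝ (fun v => fderiv ℝ F v (0, 1, 0)) (q0 s, deriv q0 s, a0 s) (1, 0, 0)
          + deriv (deriv q0) s
            * fderiv ℝ (fun v => fderiv ℝ F v (0, 1, 0)) (q0 s, deriv q0 s, a0 s) (0, 1, 0)
          + deriv a0 s
            * fderiv ℝ (fun v => fderiv ℝ F v (0, 1, 0)) (q0 s, deriv q0 s, a0 s) (0, 0, 1) :=
      hcd _ (contDiff_fderiv_apply hF' _) s
    rw [hd, fderiv_symm hF' (q0 s, deriv q0 s, a0 s) (1, 0, 0) (0, 1, 0),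
      fderiv_symm hF' (q0 s, deriv q0 s, a0 s) (0, 0, 1) (0, 1, 0), ← part1 s]
    ring
  rw [hc t, schmidt_d1 hL' hF', hfun1] at h1
  dsimp only at h1
  rw [fderiv_symm hF' (q0 t, deriv q0 t, a0 t) (0, 1, 0) (1, 0, 0),
    fderiv_symm hF' (q0 t, deriv q0 t, a0 t) (0, 0, 1) (1, 0, 0)] at h1
  -- differentiability facts
  have hBd : DifferentiableAt ℝ (fun s => fderiv ℝ L (q0 s, deriv q0 s, a0 s) (0, 1, 0)) t :=
    ((contDiff_fderiv_apply hL' (0, 1, 0)).comp hγ).differentiable one_le t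
  have hGqd : DifferentiableAt ℝ (fun s => fderiv ℝ F (q0 s, deriv q0 s, a0 s) (1, 0, 0)) t :=
    ((contDiff_fderiv_apply hF' (1, 0, 0)).comp hγ).differentiable one_le t
  have hG2smooth : ContDiff ℝ ∞ (fun r => fderiv ℝ F (q0 r, deriv q0 r, a0 r) (0, 1, 0)) :=
    (contDiff_fderiv_apply hF' (0, 1, 0)).comp hγ
  have hdG2d : DifferentiableAt ℝ
      (fun s => deriv (fun r => fderiv ℝ F (q0 r, deriv q0 r, a0 r) (0, 1, 0)) s) t :=
    ((contDiff_infty_iff_deriv.1 hG2smooth).2.differentiable one_le) t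
  have hsum : deriv (fun s => fderiv ℝ L (q0 s, deriv q0 s, a0 s) (0, 1, 0)
        + fderiv ℝ F (q0 s, deriv q0 s, a0 s) (1, 0, 0)
        + deriv (fun r => fderiv ℝ F (q0 r, deriv q0 r, a0 r) (0, 1, 0)) s) t
      = deriv (fun s => fderiv ℝ L (q0 s, deriv q0 s, a0 s) (0, 1, 0)) t
        + deriv (fun s => fderiv ℝ F (q0 s, deriv q0 s, a0 s) (1, 0, 0)) t
        + deriv (deriv (fun r => fderiv ℝ F (q0 r, deriv q0 r, a0 r) (0, 1, 0))) t := by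
    rw [deriv_fun_add (f := fun s => fderiv ℝ L (q0 s, deriv q0 s, a0 s) (0, 1, 0)
      + fderiv ℝ F (q0 s, deriv q0 s, a0 s) (1, 0, 0)) (hBd.add hGqd) hdG2d, deriv_fun_add hBd hGqd]
  rw [hsum] at h1
  have hG2C : (fun r => fderiv ℝ F (q0 r, deriv q0 r, a0 r) (0, 1, 0))
      = fun r => -fderiv ℝ L (q0 r, deriv q0 r, a0 r) (0, 0, 1) := by
    funext r; linarith [hcomp (q0 r, deriv q0 r, a0 r)]
  rw [hG2C] at h1
  have hneg : deriv (fun r => -fderiv ℝ L (q0 r, deriv q0 r, a0 r) (0, 0, 1))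
      = fun s => -deriv (fun r => fderiv ℝ L (q0 r, deriv q0 r, a0 r) (0, 0, 1)) s :=
    funext fun s => deriv.neg
  rw [hneg] at h1
  have hneg2 : deriv (fun s => -deriv (fun r => fderiv ℝ L (q0 r, deriv q0 r, a0 r) (0, 0, 1)) s) t
      = -deriv (deriv (fun r => fderiv ℝ L (q0 r, deriv q0 r, a0 r) (0, 0, 1))) t := deriv.neg
  rw [hneg2] at h1
  have hdGq : deriv (fun s => fderiv ℝ F (q0 s, deriv q0 s, a0 s) (1, 0, 0)) t
      = deriv q0 t * fderiv ℝ (fun v => fderiv ℝ F v (1, 0, 0)) (q0 t, deriv q0 t, a0 t) (1, 0, 0)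
        + deriv (deriv q0) t
          * fderiv ℝ (fun v => fderiv ℝ F v (1, 0, 0)) (q0 t, deriv q0 t, a0 t) (0, 1, 0)
        + deriv a0 t
          * fderiv ℝ (fun v => fderiv ℝ F v (1, 0, 0)) (q0 t, deriv q0 t, a0 t) (0, 0, 1) :=
    hcd _ (contDiff_fderiv_apply hF' _) t
  rw [hdGq, ← part1 t] at h1
  linear_combination h1
end

section
/- For the Lagrangian L(q₀, q₁, q₂) = ½ μ q₂² with μ ≠ 0, the function W(q₀, a₀) = c₂ q₀ + (μ/(6c₂)) a₀³ − (c/c₂) a₀ (with c₂ ≠ 0) satisfies the Schmidt Hamilton–Jacobi equation −(∂W/∂q₀)(∂W/∂a₀) + ½ μ a₀² = c identically on ℝ². -/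
/-! `W` separates as `c₂ q₀ + φ a₀`, so the Hamilton–Jacobi equation reduces to the ODE
`c₂ φ' a₀ = ½ μ a₀² - c`, which the cubic `φ a₀ = μ/(6c₂) a₀³ - (c/c₂) a₀` solves. -/

section SeparatedSum

variable {𝕜 : Type*} [NontriviallyNormedField 𝕜] {f g : 𝕜 → 𝕜} {f' g' : 𝕜} {p : 𝕜 × 𝕜}

theorem HasDerivAt.hasFDerivAt_add_prod (hf : HasDerivAt f f' p.1) (hg : HasDerivAt g g' p.2) :
    HasFDerivAt (fun q : 𝕜 × 𝕜 => f q.1 + g q.2)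
      (f' • ContinuousLinearMap.fst 𝕜 𝕜 𝕜 + g' • ContinuousLinearMap.snd 𝕜 𝕜 𝕜) p :=
  (hf.comp_hasFDerivAt p hasFDerivAt_fst).add (hg.comp_hasFDerivAt p hasFDerivAt_snd)

theorem fderiv_add_prod_apply_fst (hf : HasDerivAt f f' p.1) (hg : HasDerivAt g g' p.2) :
    fderiv 𝕜 (fun q : 𝕜 × 𝕜 => f q.1 + g q.2) p (1, 0) = f' := by
  simp [(hf.hasFDerivAt_add_prod hg).fderiv]

theorem fderiv_add_prod_apply_snd (hf : HasDerivAt f f' p.1) (hg : HasDerivAt g g' p.2) :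
    fderiv 𝕜 (fun q : 𝕜 × 𝕜 => f q.1 + g q.2) p (0, 1) = g' := by
  simp [(hf.hasFDerivAt_add_prod hg).fderiv]

end SeparatedSum

theorem hasDerivAt_cubic_sub_linear (α β x : ℝ) :
    HasDerivAt (fun a : ℝ => α * a ^ 3 - β * a) (3 * α * x ^ 2 - β) x :=
  (((hasDerivAt_pow 3 x).const_mul α).sub ((hasDerivAt_id' x).const_mul β)).congr_deriv
    (by push_cast; ring)

theorem stmt_5_general (μ c c₂ : ℝ) (hc₂ : c₂ ≠ 0)
    (W : ℝ × ℝ → ℝ)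
    (hW : ∀ p : ℝ × ℝ, W p = c₂ * p.1 + μ / (6 * c₂) * p.2 ^ 3 - c / c₂ * p.2) :
    ∀ p : ℝ × ℝ, -(fderiv ℝ W p (1, 0) * fderiv ℝ W p (0, 1)) + μ / 2 * p.2 ^ 2 = c := by
  intro p
  have hW_sep : W = fun q : ℝ × ℝ => c₂ * q.1 + (μ / (6 * c₂) * q.2 ^ 3 - c / c₂ * q.2) :=
    funext fun q => by rw [hW]; ring
  have hq₀ : HasDerivAt (fun q₀ : ℝ => c₂ * q₀) c₂ p.1 := by
    simpa using (hasDerivAt_id p.1).const_mul c₂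
  have ha₀ := hasDerivAt_cubic_sub_linear (μ / (6 * c₂)) (c / c₂) p.2
  rw [hW_sep, fderiv_add_prod_apply_fst hq₀ ha₀, fderiv_add_prod_apply_snd hq₀ ha₀]
  field_simp
  ring

/-- For `L = ½μq₂²`, the function `W(q₀,a₀) = c₂q₀ + (μ/(6c₂))a₀³ − (c/c₂)a₀`
solves the Schmidt Hamilton–Jacobi equation `−(∂W/∂q₀)(∂W/∂a₀) + ½μa₀² = c`. -/
theorem stmt_5 (μ c c₂ : ℝ) (hμ : μ ≠ 0) (hc₂ : c₂ ≠ 0)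
    (W : ℝ × ℝ → ℝ)
    (hW : ∀ p : ℝ × ℝ, W p = c₂ * p.1 + μ / (6 * c₂) * p.2 ^ 3 - c / c₂ * p.2) :
    ∀ p : ℝ × ℝ, -(fderiv ℝ W p (1, 0) * fderiv ℝ W p (0, 1)) + μ / 2 * p.2 ^ 2 = c :=
  stmt_5_general μ c c₂ hc₂ W hW
end

section
/- Let γ = γ⁰(q₀,q₁) dq₀ + γ¹(q₀,q₁) dq₁ be a closed one-form on Tℝ = ℝ² and L(q₀,q₁,q₂) = ½ q₁² − ½ q₂². If γ satisfies the system q₁ ∂γ⁰/∂q₀ + q₂ ∂γ¹/∂q₀ = 0, γ⁰ + q₁ ∂γ⁰/∂q₁ + q₂ ∂γ¹/∂q₁ − q₁ = 0, γ¹ + q₂ = 0 for all (q₀,q₁) in an open set and for q₂ = −γ¹(q₀,q₁), then the function E(q₀,q₁) = γ⁰ q₁ + γ¹ q₂ + ½q₂² − ½q₁² (with q₂ = −γ¹) has vanishing differential, i.e., is locally constant. -/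
/-- Direction (1) ⟹ (2) of the implicit Hamilton–Jacobi theorem for the
javelin Lagrangian `L = ½q₁² − ½q₂²`: if the closed one-form
`γ = γ⁰dq₀ + γ¹dq₁` solves the Hamilton–Jacobi system (with `q₂ = −γ¹`), then
the restricted energy `E = γ⁰q₁ + γ¹q₂ + ½q₂² − ½q₁²` has vanishing
differential, i.e. is locally constant. -/
theorem stmt_16 (U : Set (ℝ × ℝ)) (hU : IsOpen U)
    (γ0 γ1 : ℝ × ℝ → ℝ)
    (hγ0 : ContDiffOn ℝ (⊤ : ℕ∞) γ0 U) (hγ1 : ContDiffOn ℝ (⊤ : ℕ∞) γ1 U)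
    (hclosed : ∀ p ∈ U, fderiv ℝ γ0 p (0, 1) = fderiv ℝ γ1 p (1, 0))
    (heq1 : ∀ p ∈ U, p.2 * fderiv ℝ γ0 p (1, 0) + (-γ1 p) * fderiv ℝ γ1 p (1, 0) = 0)
    (heq2 : ∀ p ∈ U, γ0 p + p.2 * fderiv ℝ γ0 p (0, 1)
      + (-γ1 p) * fderiv ℝ γ1 p (0, 1) - p.2 = 0)
    (heq3 : ∀ p ∈ U, γ1 p + (-γ1 p) = 0) :
    ∀ p ∈ U, fderiv ℝ (fun p : ℝ × ℝ =>
      γ0 p * p.2 + γ1 p * (-γ1 p) + (-γ1 p) ^ 2 / 2 - p.2 ^ 2 / 2) p = 0 := by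
  intro p hp
  have hmem := hU.mem_nhds hp
  have h0 : DifferentiableAt ℝ γ0 p :=
    (hγ0.contDiffAt hmem).differentiableAt (by simp)
  have h1 : DifferentiableAt ℝ γ1 p :=
    (hγ1.contDiffAt hmem).differentiableAt (by simp)
  have hsnd : HasFDerivAt (fun q : ℝ × ℝ => q.2)
      (ContinuousLinearMap.snd ℝ ℝ ℝ) p := hasFDerivAt_snd
  have H0 := h0.hasFDerivAt
  have H1 := h1.hasFDerivAt
  have H := ((H0.mul hsnd).sub ((H1.mul H1).const_mul ((1:ℝ)/2))).sub
    ((hsnd.mul hsnd).const_mul ((1:ℝ)/2))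
  have hfun : (fun q : ℝ × ℝ => γ0 q * q.2 - (1:ℝ)/2 * (γ1 q * γ1 q) - (1:ℝ)/2 * (q.2 * q.2))
      = (fun q : ℝ × ℝ =>
        γ0 q * q.2 + γ1 q * (-γ1 q) + (-γ1 q) ^ 2 / 2 - q.2 ^ 2 / 2) := by
    funext q; ring
  replace H : HasFDerivAt (fun q : ℝ × ℝ =>
      γ0 q * q.2 + γ1 q * (-γ1 q) + (-γ1 q) ^ 2 / 2 - q.2 ^ 2 / 2)
      (((γ0 p • ContinuousLinearMap.snd ℝ ℝ ℝ + p.2 • fderiv ℝ γ0 p) -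
      ((1:ℝ)/2) • (γ1 p • fderiv ℝ γ1 p + γ1 p • fderiv ℝ γ1 p)) -
      ((1:ℝ)/2) • (p.2 • ContinuousLinearMap.snd ℝ ℝ ℝ + p.2 • ContinuousLinearMap.snd ℝ ℝ ℝ)) p := by
    rw [← hfun]; exact H
  have hD : (((γ0 p • ContinuousLinearMap.snd ℝ ℝ ℝ + p.2 • fderiv ℝ γ0 p) -
      ((1:ℝ)/2) • (γ1 p • fderiv ℝ γ1 p + γ1 p • fderiv ℝ γ1 p)) -
      ((1:ℝ)/2) • (p.2 • ContinuousLinearMap.snd ℝ ℝ ℝ + p.2 • ContinuousLinearMap.snd ℝ ℝ ℝ))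
      = (0 : ℝ × ℝ →L[ℝ] ℝ) := by
    refine ContinuousLinearMap.ext fun v => ?_
    have hv : v = v.1 • ((1 : ℝ), (0 : ℝ)) + v.2 • ((0 : ℝ), (1 : ℝ)) := by
      simp [Prod.ext_iff]
    have hv0 : fderiv ℝ γ0 p v
        = v.1 * fderiv ℝ γ0 p (1, 0) + v.2 * fderiv ℝ γ0 p (0, 1) := by
      conv_lhs => rw [hv]
      rw [map_add, map_smul, map_smul, smul_eq_mul, smul_eq_mul]
    have hv1 : fderiv ℝ γ1 p v
        = v.1 * fderiv ℝ γ1 p (1, 0) + v.2 * fderiv ℝ γ1 p (0, 1) := by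
      conv_lhs => rw [hv]
      rw [map_add, map_smul, map_smul, smul_eq_mul, smul_eq_mul]
    simp only [ContinuousLinearMap.sub_apply, ContinuousLinearMap.add_apply,
      ContinuousLinearMap.smul_apply, ContinuousLinearMap.coe_snd',
      ContinuousLinearMap.zero_apply,
      smul_eq_mul, hv0, hv1]
    linear_combination v.1 * heq1 p hp + v.2 * heq2 p hp
  rw [hD] at H
  exact H.fderiv
end
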